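/- arXiv:1007.4392 — 4 statements merged into one kernel-verified Lean document; each statement's English description precedes it below -/
import Mathlib

section
/- Let n be a positive natural number and let J be a real n×n matrix satisfying J * J = -1. Then the sum of the squares of all entries of J is at least n, i.e. Σ_{i,j} (J i j)² ≥ n. -/
/-- If `J` is a real `n × n` matrix with `J * J = -1`, then the sum of the
squares of all entries of `J` is at least `n`. -/
theorem sum_sq_entries_ge_of_sq_eq_neg_one (n : ℕ) (hn : 0 < n)
    (J : Matrix (Fin n) (Fin n) ℝ) (hJ : J * J = -1) :
    (n : ℝ) ≤ ∑ i : Fin n, ∑ j : Fin n, (J i j) ^ 2 := by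
  have key : ∀ i : Fin n,
      (1 : ℝ) ≤ ∑ k : Fin n, ((J i k) ^ 2 + (J k i) ^ 2) / 2 := by
    intro i
    have h1 : ∑ k : Fin n, J i k * J k i = -1 := by
      have := congrFun (congrFun hJ i) i
      simpa [Matrix.mul_apply, Matrix.one_apply] using this
    have h2 : (1 : ℝ) = |∑ k : Fin n, J i k * J k i| := by
      rw [h1]; norm_num
    calc (1 : ℝ) = |∑ k : Fin n, J i k * J k i| := h2
      _ ≤ ∑ k : Fin n, |J i k * J k i| := Finset.abs_sum_le_sum_abs _ _
      _ ≤ ∑ k : Fin n, ((J i k) ^ 2 + (J k i) ^ 2) / 2 := by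
          apply Finset.sum_le_sum
          intro k _
          rw [abs_mul]
          nlinarith [sq_nonneg (|J i k| - |J k i|), sq_abs (J i k), sq_abs (J k i),
            abs_nonneg (J i k), abs_nonneg (J k i)]
  calc (n : ℝ) = ∑ _i : Fin n, (1 : ℝ) := by simp
    _ ≤ ∑ i : Fin n, ∑ k : Fin n, ((J i k) ^ 2 + (J k i) ^ 2) / 2 :=
        Finset.sum_le_sum fun i _ => key i
    _ = ∑ i : Fin n, ∑ j : Fin n, (J i j) ^ 2 := by
        have : ∑ i : Fin n, ∑ k : Fin n, (J k i) ^ 2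
            = ∑ i : Fin n, ∑ k : Fin n, (J i k) ^ 2 := Finset.sum_comm ..
        simp only [add_div, Finset.sum_add_distrib, Finset.sum_div, ← Finset.sum_div]
        rw [this]
        ring
end

section
/- Let J be a real 6×6 matrix satisfying J * J = -1, and let R i j k m = δ_{ik}δ_{jm} − δ_{jk}δ_{im} be the curvature tensor of the round 6-sphere in an orthonormal frame. Then Σ_{i,j,k,m} (R i j i k) * (J m k) * (J m j) > Σ_{i,j,k,m} (R i j k m) * (J k i) * (J m j). (Concretely, the left-hand side equals 5·Σ_{i,j}(J i j)² ≥ 30 while the right-hand side equals (trace J)² − trace(J²) = 6.) -/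
/-- The curvature tensor of the round `6`-sphere in an orthonormal frame:
`R i j k m = δ_{ik} δ_{jm} − δ_{jk} δ_{im}`. -/
def sphereCurv6 (i j k m : Fin 6) : ℝ :=
  (if i = k then (1 : ℝ) else 0) * (if j = m then (1 : ℝ) else 0) -
    (if j = k then (1 : ℝ) else 0) * (if i = m then (1 : ℝ) else 0)

/-- If `J` is a real `6 × 6` matrix with `J * J = -1`, then
`Σ_{i,j,k,m} R i j i k * J m k * J m j > Σ_{i,j,k,m} R i j k m * J k i * J m j`
for the curvature tensor `R` of the round `6`-sphere.  This is the algebraic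
contradiction proving that the round `S⁶` admits no harmonic complex
structure. -/
theorem sphereCurv6_strict_inequality (J : Matrix (Fin 6) (Fin 6) ℝ)
    (hJ : J * J = -1) :
    (∑ i : Fin 6, ∑ j : Fin 6, ∑ k : Fin 6, ∑ m : Fin 6,
        sphereCurv6 i j k m * J k i * J m j) <
      ∑ i : Fin 6, ∑ j : Fin 6, ∑ k : Fin 6, ∑ m : Fin 6,
        sphereCurv6 i j i k * J m k * J m j := by
  set t : ℝ := ∑ i : Fin 6, J i i with ht
  set n : ℝ := ∑ i : Fin 6, ∑ j : Fin 6, (J i j) ^ 2 with hn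
  have hdiag : ∀ i : Fin 6, ∑ j : Fin 6, J i j * J j i = -1 := by
    intro i
    have h := congrFun (congrFun hJ i) i
    simpa [Matrix.mul_apply, Matrix.one_apply] using h
  have hs : ∑ i : Fin 6, ∑ j : Fin 6, J i j * J j i = -6 := by
    simp only [hdiag]
    norm_num
  -- left-hand side
  have hL : (∑ i : Fin 6, ∑ j : Fin 6, ∑ k : Fin 6, ∑ m : Fin 6,
      sphereCurv6 i j k m * J k i * J m j) = t * t + 6 := by
    have inner : ∀ i j : Fin 6, (∑ k : Fin 6, ∑ m : Fin 6,
        sphereCurv6 i j k m * J k i * J m j) = J i i * J j j - J j i * J i j := by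
      intro i j
      simp only [sphereCurv6, sub_mul, ite_mul, one_mul, zero_mul, Finset.sum_sub_distrib]
      congr 1 <;> simp [Finset.sum_ite_eq]
    simp only [inner, Finset.sum_sub_distrib]
    have h1 : (∑ i : Fin 6, ∑ j : Fin 6, J i i * J j j) = t * t := by
      rw [ht, Finset.sum_mul_sum]
    have h2 : (∑ i : Fin 6, ∑ j : Fin 6, J j i * J i j) = -6 := by
      rw [← hs, Finset.sum_comm]
    rw [h1, h2]; ring
  -- right-hand side
  have hR : (∑ i : Fin 6, ∑ j : Fin 6, ∑ k : Fin 6, ∑ m : Fin 6,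
      sphereCurv6 i j i k * J m k * J m j) = 5 * n := by
    have inner : ∀ i j : Fin 6, (∑ k : Fin 6, ∑ m : Fin 6,
        sphereCurv6 i j i k * J m k * J m j)
        = (∑ m : Fin 6, (J m j) ^ 2)
          - (if j = i then ∑ m : Fin 6, J m i * J m j else 0) := by
      intro i j
      simp only [sphereCurv6, sub_mul, ite_mul, one_mul, zero_mul, Finset.sum_sub_distrib]
      congr 1
      · simp [Finset.sum_ite_eq, sq]
      · split <;> simp [Finset.sum_ite_eq]
    simp only [inner, Finset.sum_sub_distrib]
    have h1 : (∑ i : Fin 6, ∑ j : Fin 6, ∑ m : Fin 6, (J m j) ^ 2) = 6 * n := by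
      rw [show (∑ j : Fin 6, ∑ m : Fin 6, (J m j) ^ 2) = n by rw [hn, Finset.sum_comm]]
      rw [Finset.sum_const]
      simp [Finset.card_univ, mul_comm]
    have h2 : (∑ i : Fin 6, ∑ j : Fin 6,
        (if j = i then ∑ m : Fin 6, J m i * J m j else 0)) = n := by
      rw [show (∑ i : Fin 6, ∑ j : Fin 6,
          (if j = i then ∑ m : Fin 6, J m i * J m j else 0))
          = ∑ i : Fin 6, ∑ m : Fin 6, (J m i) ^ 2 by
        refine Finset.sum_congr rfl fun i _ => ?_
        simp [Finset.sum_ite_eq', sq]]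
      rw [hn, Finset.sum_comm]
    rw [h1, h2]; ring
  -- key inequality : n ≥ 6 + t^2/3
  have key : 6 + t ^ 2 / 3 ≤ n := by
    have h0 : (0:ℝ) ≤ ∑ i : Fin 6, ∑ j : Fin 6,
        (J i j + J j i - (if i = j then t / 3 else 0)) ^ 2 :=
      Finset.sum_nonneg fun i _ => Finset.sum_nonneg fun j _ => sq_nonneg _
    have hexp : (∑ i : Fin 6, ∑ j : Fin 6,
        (J i j + J j i - (if i = j then t / 3 else 0)) ^ 2)
        = 2 * n + 2 * (-6) - 2 / 3 * t ^ 2 := by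
      have e1 : ∀ i j : Fin 6, (J i j + J j i - (if i = j then t / 3 else 0)) ^ 2
          = (J i j) ^ 2 + (J j i) ^ 2 + 2 * (J i j * J j i)
            - (if i = j then 2 * (J i j + J j i) * (t / 3) else 0)
            + (if i = j then t ^ 2 / 9 else 0) := by
        intro i j; split <;> ring
      simp only [e1, Finset.sum_add_distrib, Finset.sum_sub_distrib]
      have c1 : (∑ i : Fin 6, ∑ j : Fin 6, (J j i) ^ 2) = n := by rw [hn, Finset.sum_comm]
      have c2 : (∑ i : Fin 6, ∑ j : Fin 6, 2 * (J i j * J j i)) = 2 * (-6) := by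
        simp only [← Finset.mul_sum]
        rw [hs]
      have c3 : (∑ i : Fin 6, ∑ j : Fin 6,
          (if i = j then 2 * (J i j + J j i) * (t / 3) else 0)) = 4 / 3 * t ^ 2 := by
        rw [show (∑ i : Fin 6, ∑ j : Fin 6,
            (if i = j then 2 * (J i j + J j i) * (t / 3) else 0))
            = ∑ i : Fin 6, 4 / 3 * t * J i i by
          refine Finset.sum_congr rfl fun i _ => ?_
          rw [Finset.sum_ite_eq]
          simp; ring]
        rw [← Finset.mul_sum, ← ht]; ring
      have c4 : (∑ i : Fin 6, ∑ j : Fin 6, (if i = j then t ^ 2 / 9 else 0))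
          = 2 / 3 * t ^ 2 := by
        simp [Finset.sum_ite_eq]
        ring
      rw [c1, c2, c3, c4, hn]
      ring
    rw [hexp] at h0
    linarith
  rw [hL, hR]
  nlinarith [sq_nonneg t]
end

section
/- Let E be a finite-dimensional real normed vector space, let J : E → (E →L[ℝ] E) be a C¹ map such that J(p) ∘ J(p) = −id for every p ∈ E, and let X, Y : E → E be C¹ vector fields. For a vector field Z define the covariant derivative (∇_Z J)(W)(p) := (fderiv ℝ J p (Z p)) (W p) for a vector field W, define (J·Z)(p) := J(p)(Z(p)), write dJ(X,Y)(p) := (∇_X J)(Y)(p) − (∇_Y J)(X)(p), and let [·,·] denote the Lie bracket of vector fields, [X,Y](p) = fderiv ℝ Y p (X p) − fderiv ℝ X p (Y p). Then for every p ∈ E: dJ(X,Y)(p) − dJ(J·X, J·Y)(p) = [J·X, Y](p) + [X, J·Y](p) + J(p)([J·X, J·Y](p)) − J(p)([X,Y](p)). -/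
/-
Differentiating `J ∘ J = -id` shows that every derivative `DJ(p)(v)` anticommutes with `J(p)`.
Expanding the four brackets by the product rule `D(J·Z) = J ∘ DZ + DJ(·)(Z)`, the terms
containing `DX` and `DY` cancel against each other (using `J² = -id`), and the remaining terms
in `DJ` reassemble into `dJ(X,Y) − dJ(J·X, J·Y)` by anticommutation.
-/

open scoped Topology

variable {E : Type*} [NormedAddCommGroup E] [NormedSpace ℝ E]

/-- The action of a pointwise endomorphism field `J` on a vector field `Z`:
`(J·Z)(p) = J(p)(Z(p))`. -/
def jApply (J : E → (E →L[ℝ] E)) (Z : E → E) : E → E :=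
  fun p => J p (Z p)

/-- The Lie bracket of vector fields on a vector space:
`[X,Y](p) = DY(p)(X(p)) − DX(p)(Y(p))`. -/
noncomputable def lieBkt (X Y : E → E) : E → E :=
  fun p => fderiv ℝ Y p (X p) - fderiv ℝ X p (Y p)

theorem fderiv_apply_apply_eq_neg_of_comp_self_eq_neg_id {𝕜 F : Type*}
    [NontriviallyNormedField 𝕜] [NormedAddCommGroup F] [NormedSpace 𝕜 F] {J : F → F →L[𝕜] F} {p : F}
    (hJ : DifferentiableAt 𝕜 J p) (hJ2 : ∀ q, (J q).comp (J q) = -ContinuousLinearMap.id 𝕜 F)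
    (v w : F) : fderiv 𝕜 J p v (J p w) = -J p (fderiv 𝕜 J p v w) := by
  have hconst : HasFDerivAt (fun q => (J q).comp (J q)) (0 : F →L[𝕜] F →L[𝕜] F) p := by
    simpa only [hJ2] using hasFDerivAt_const (-ContinuousLinearMap.id 𝕜 F) p
  have hprod := hJ.hasFDerivAt.clm_comp hJ.hasFDerivAt
  have hzero := congrArg (fun L => L v w) (hprod.unique hconst)
  simp only [add_apply, ContinuousLinearMap.coe_comp, Function.comp_apply,
    ContinuousLinearMap.compL_apply, ContinuousLinearMap.flip_apply,
    zero_apply] at hzero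
  exact eq_neg_of_add_eq_zero_right hzero

theorem fderiv_jApply {J : E → E →L[ℝ] E} {Z : E → E} {p : E} (hJ : DifferentiableAt ℝ J p)
    (hZ : DifferentiableAt ℝ Z p) :
    fderiv ℝ (jApply J Z) p = (J p).comp (fderiv ℝ Z p) + (fderiv ℝ J p).flip (Z p) :=
  fderiv_clm_apply hJ hZ

theorem dJ_sub_dJ_eq_nijenhuis_general
    (J : E → (E →L[ℝ] E)) (hJ : ContDiff ℝ 1 J)
    (hJ2 : ∀ p, (J p).comp (J p) = -ContinuousLinearMap.id ℝ E)
    (X Y : E → E) (hX : ContDiff ℝ 1 X) (hY : ContDiff ℝ 1 Y) (p : E) :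
    ((fderiv ℝ J p (X p)) (Y p) - (fderiv ℝ J p (Y p)) (X p)) -
        ((fderiv ℝ J p (jApply J X p)) (jApply J Y p) -
          (fderiv ℝ J p (jApply J Y p)) (jApply J X p)) =
      lieBkt (jApply J X) Y p + lieBkt X (jApply J Y) p +
        J p (lieBkt (jApply J X) (jApply J Y) p) - J p (lieBkt X Y p) := by
  have hJp : DifferentiableAt ℝ J p := hJ.differentiable one_ne_zero p
  have hJJ (w : E) : J p (J p w) = -w := by
    simpa using congrArg (fun L => L w) (hJ2 p)
  simp only [lieBkt, jApply, fderiv_jApply hJp (hX.differentiable one_ne_zero p),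
    fderiv_jApply hJp (hY.differentiable one_ne_zero p), add_apply,
    ContinuousLinearMap.coe_comp, Function.comp_apply, ContinuousLinearMap.flip_apply,
    map_sub, map_add, fderiv_apply_apply_eq_neg_of_comp_self_eq_neg_id hJp hJ2, hJJ]
  abel

/-- Flat-space instance of `dJ(X,Y) − dJ(JX,JY) = N(J)(X,Y)`:
for a `C¹` almost complex structure `J` on a finite-dimensional real vector
space (`J(p)² = −id`) and `C¹` vector fields `X, Y`, the difference
`dJ(X,Y)(p) − dJ(J·X, J·Y)(p)`, where `dJ(X,Y)(p) = (∇_X J)(Y)(p) − (∇_Y J)(X)(p)`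
and `(∇_Z J)(W)(p) = (DJ(p)(Z(p)))(W(p))`, equals the Nijenhuis tensor
`[J·X, Y](p) + [X, J·Y](p) + J(p)([J·X, J·Y](p)) − J(p)([X,Y](p))`. -/
theorem dJ_sub_dJ_eq_nijenhuis [FiniteDimensional ℝ E]
    (J : E → (E →L[ℝ] E)) (hJ : ContDiff ℝ 1 J)
    (hJ2 : ∀ p, (J p).comp (J p) = -ContinuousLinearMap.id ℝ E)
    (X Y : E → E) (hX : ContDiff ℝ 1 X) (hY : ContDiff ℝ 1 Y) (p : E) :
    ((fderiv ℝ J p (X p)) (Y p) - (fderiv ℝ J p (Y p)) (X p)) -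
        ((fderiv ℝ J p (jApply J X p)) (jApply J Y p) -
          (fderiv ℝ J p (jApply J Y p)) (jApply J X p)) =
      lieBkt (jApply J X) Y p + lieBkt X (jApply J Y) p +
        J p (lieBkt (jApply J X) (jApply J Y) p) - J p (lieBkt X Y p) :=
  dJ_sub_dJ_eq_nijenhuis_general J hJ hJ2 X Y hX hY p
end

section
/- Let E be a finite-dimensional real normed vector space and let J : E → (E →L[ℝ] E) be a C¹ map such that J(p) ∘ J(p) = −id for every p ∈ E. Suppose that for all C¹ vector fields X, Y : E → E and all p ∈ E one has (fderiv ℝ J p (X p))(Y p) = (fderiv ℝ J p (Y p))(X p) (i.e. the tangent-bundle-valued 2-form dJ vanishes). Then the Nijenhuis tensor of J vanishes: for all C¹ vector fields X, Y and all p ∈ E, [J·X, Y](p) + [X, J·Y](p) + J(p)([J·X, J·Y](p)) − J(p)([X,Y](p)) = 0, where (J·Z)(p) := J(p)(Z(p)) and [X,Y](p) = fderiv ℝ Y p (X p) − fderiv ℝ X p (Y p). -/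
variable {E : Type*} [NormedAddCommGroup E] [NormedSpace ℝ E]

/-!
Write `A v := DJ(p) v`. Differentiating the constant `J² = -1` shows that `A v` anticommutes with
`J(p)`, and `dJ = 0` says that `A v w` is symmetric in `v, w`; together, `A (J v) = -J ∘ A v`.
Expanding the Nijenhuis tensor by the product rule, the derivatives of `X` and `Y` cancel by
`J² = -1`, and the remaining terms in `A` cancel by these two identities.
-/

theorem fderiv_jApply_apply {J : E → E →L[ℝ] E} {Z : E → E} {p : E}
    (hJ : DifferentiableAt ℝ J p) (hZ : DifferentiableAt ℝ Z p) (v : E) :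
    fderiv ℝ (jApply J Z) p v = J p (fderiv ℝ Z p v) + fderiv ℝ J p v (Z p) := by
  have h : fderiv ℝ (jApply J Z) p = (J p).comp (fderiv ℝ Z p) + (fderiv ℝ J p).flip (Z p) :=
    (hJ.hasFDerivAt.clm_apply hZ.hasFDerivAt).fderiv
  rw [h]
  rfl

theorem fderiv_comp_add_comp_fderiv_eq_zero {J : E → E →L[ℝ] E} {p : E}
    (hJ : DifferentiableAt ℝ J p)
    (hJ2 : ∀ q, (J q).comp (J q) = -ContinuousLinearMap.id ℝ E) (v : E) :
    (fderiv ℝ J p v).comp (J p) + (J p).comp (fderiv ℝ J p v) = 0 := by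
  have h := hJ.hasFDerivAt.clm_comp hJ.hasFDerivAt
  rw [show (fun q => (J q).comp (J q)) = fun _ => -ContinuousLinearMap.id ℝ E from funext hJ2]
    at h
  have := DFunLike.congr_fun (h.unique (hasFDerivAt_const _ p)) v
  simpa [add_comm] using this

theorem fderiv_apply_apply_eq_neg {J : E → E →L[ℝ] E} {p : E}
    (hJ : DifferentiableAt ℝ J p)
    (hJ2 : ∀ q, (J q).comp (J q) = -ContinuousLinearMap.id ℝ E)
    (hsymm : ∀ v w, fderiv ℝ J p v w = fderiv ℝ J p w v) (v w : E) :
    fderiv ℝ J p (J p v) w = -J p (fderiv ℝ J p v w) := by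
  have h := DFunLike.congr_fun (fderiv_comp_add_comp_fderiv_eq_zero hJ hJ2 w) v
  rw [hsymm, hsymm v w]
  simpa [add_eq_zero_iff_eq_neg] using h

theorem nijenhuis_eq_zero_of_dJ_eq_zero_general
    (J : E → (E →L[ℝ] E)) (hJ : ContDiff ℝ 1 J)
    (hJ2 : ∀ p, (J p).comp (J p) = -ContinuousLinearMap.id ℝ E)
    (hdJ : ∀ X Y : E → E, ContDiff ℝ 1 X → ContDiff ℝ 1 Y → ∀ p : E,
      (fderiv ℝ J p (X p)) (Y p) = (fderiv ℝ J p (Y p)) (X p)) :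
    ∀ X Y : E → E, ContDiff ℝ 1 X → ContDiff ℝ 1 Y → ∀ p : E,
      lieBkt (jApply J X) Y p + lieBkt X (jApply J Y) p +
          J p (lieBkt (jApply J X) (jApply J Y) p) - J p (lieBkt X Y p) = 0 := by
  intro X Y hX hY p
  have hJp := hJ.differentiable one_ne_zero p
  have hsymm : ∀ v w, fderiv ℝ J p v w = fderiv ℝ J p w v := fun v w =>
    hdJ (fun _ => v) (fun _ => w) contDiff_const contDiff_const p
  have hJJ : ∀ v, J p (J p v) = -v := fun v => by simpa using DFunLike.congr_fun (hJ2 p) v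
  have hanti := fderiv_apply_apply_eq_neg hJp hJ2 hsymm
  simp only [lieBkt, fderiv_jApply_apply hJp (hX.differentiable one_ne_zero p),
    fderiv_jApply_apply hJp (hY.differentiable one_ne_zero p), jApply, map_add, map_sub,
    map_neg, hanti, hsymm (Y p) (X p), hJJ]
  abel

/-- Flat-space instance of the paper's Proposition 2.4: if `J` is a `C¹` almost
complex structure on a finite-dimensional real vector space (`J(p)² = −id`)
whose tangent-bundle-valued `2`-form `dJ` vanishes, i.e.
`(DJ(p)(X(p)))(Y(p)) = (DJ(p)(Y(p)))(X(p))` for all `C¹` vector fields `X, Y`,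
then the Nijenhuis tensor of `J` vanishes:
`[J·X, Y] + [X, J·Y] + J[J·X, J·Y] − J[X,Y] = 0`. -/
theorem nijenhuis_eq_zero_of_dJ_eq_zero [FiniteDimensional ℝ E]
    (J : E → (E →L[ℝ] E)) (hJ : ContDiff ℝ 1 J)
    (hJ2 : ∀ p, (J p).comp (J p) = -ContinuousLinearMap.id ℝ E)
    (hdJ : ∀ X Y : E → E, ContDiff ℝ 1 X → ContDiff ℝ 1 Y → ∀ p : E,
      (fderiv ℝ J p (X p)) (Y p) = (fderiv ℝ J p (Y p)) (X p)) :
    ∀ X Y : E → E, ContDiff ℝ 1 X → ContDiff ℝ 1 Y → ∀ p : E,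
      lieBkt (jApply J X) Y p + lieBkt X (jApply J Y) p +
          J p (lieBkt (jApply J X) (jApply J Y) p) - J p (lieBkt X Y p) = 0 :=
  nijenhuis_eq_zero_of_dJ_eq_zero_general J hJ hJ2 hdJ
end
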